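/- Assume the losses are L-Lipschitz and ψ is 1-strongly convex w.r.t. ‖·‖. Then the doubling-trick IOMD algorithm with threshold sequence L²2^i and step sizes η_i = β/(L√(2^i)) has regret R_T(u) ≤ c·(B_ψ(u, x₁)/β + β)·L·√(T+1) + c·βL/2 for every u ∈ ℝ^d, where c = √2/(√2 − 1). -/

import Mathlib

/-!
Each round of implicit online mirror descent has a gain `δ_t ≥ 0`, and strong convexity together
with the Lipschitz bound caps `δ_t / η` at `L² / 2`. The proximal three-point inequality bounds
the regret of round `t` by `δ_t` plus a telescoping difference of Bregman divergences divided by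
`η`, so an epoch with step size `η_i` costs at most `B_ψ(u, x₁) / η_i` plus its total gain, which
the restart rule keeps below `η_i L² 2ⁱ + η_i L² / 2`. Conversely the gains of a completed epoch
`i` satisfy `∑ δ_t / η_i ≥ L² 2ⁱ`, while `∑ δ_t / η ≤ L² T / 2` overall, so after `j` restarts
`2ʲ ≤ T + 1`. The epoch budgets then sum as two geometric series in `√2`.
-/

open Finset

/-- The Bregman divergence of `ψ` with gradient `Dψ`. -/
noncomputable def breg {E : Type*} [NormedAddCommGroup E] [InnerProductSpace ℝ E]
    (ψ : E → ℝ) (Dψ : E → E) (x y : E) : ℝ :=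
  ψ x - ψ y - (inner ℝ (Dψ y) (x - y) : ℝ)

section Bregman

variable {E : Type*} [NormedAddCommGroup E] [InnerProductSpace ℝ E]
  {ψ : E → ℝ} {Dψ : E → E}

@[simp]
theorem breg_self (a : E) : breg ψ Dψ a a = 0 := by
  simp [breg]

theorem half_sq_le_breg {n : E → ℝ} {a b : E}
    (hsc : ψ b + inner ℝ (Dψ b) (a - b) + 1 / 2 * n (a - b) ^ 2 ≤ ψ a) :
    1 / 2 * n (a - b) ^ 2 ≤ breg ψ Dψ a b := by
  unfold breg
  linarith

theorem breg_three_point (u p xc : E) :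
    breg ψ Dψ u p =
      breg ψ Dψ u xc - breg ψ Dψ p xc - inner ℝ (Dψ p - Dψ xc) (u - p) := by
  simp only [breg, inner_sub_left, inner_sub_right]
  ring

theorem breg_div_le_sub_of_isMinOn {f : E → ℝ} {η : ℝ} (hη : 0 < η) {xc p : E}
    (hmin : IsMinOn (fun y => breg ψ Dψ y xc + η * f y) Set.univ p) :
    breg ψ Dψ p xc / η ≤ f xc - f p := by
  have hle := isMinOn_univ_iff.1 hmin xc
  simp only [breg_self, zero_add] at hle
  rw [div_le_iff₀ hη]
  linarith

/-- With `r = n (p - xc)`, strong convexity makes the Bregman term at least `r² / 2`, and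
`L r - r² / (2η) ≤ η L² / 2`. -/
theorem sub_sub_breg_div_le {n f : E → ℝ} {L η : ℝ} (hη : 0 < η) {xc p : E}
    (hsc : ψ xc + inner ℝ (Dψ xc) (p - xc) + 1 / 2 * n (p - xc) ^ 2 ≤ ψ p)
    (hlip : |f p - f xc| ≤ L * n (p - xc)) :
    f xc - f p - breg ψ Dψ p xc / η ≤ η * L ^ 2 / 2 := by
  have hbreg := half_sq_le_breg hsc
  have hloss : f xc - f p ≤ L * n (p - xc) :=
    (abs_sub_comm (f p) (f xc) ▸ le_abs_self (f xc - f p)).trans hlip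
  have hdiv : L * n (p - xc) - η * L ^ 2 / 2 ≤ breg ψ Dψ p xc / η := by
    rw [le_div_iff₀ hη]
    nlinarith [sq_nonneg (n (p - xc) - η * L)]
  linarith

variable [CompleteSpace E]

theorem hasGradientAt_breg_left {p : E} (hψ : HasGradientAt ψ (Dψ p) p) (xc : E) :
    HasGradientAt (fun y => breg ψ Dψ y xc) (Dψ p - Dψ xc) p := by
  rw [hasGradientAt_iff_hasFDerivAt] at hψ ⊢
  have hlin : HasFDerivAt (fun y => inner ℝ (Dψ xc) (y - xc)) (innerSL ℝ (Dψ xc)) p := by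
    simpa [inner_sub_right] using
      ((innerSL ℝ (Dψ xc)).hasFDerivAt (x := p)).sub_const (inner ℝ (Dψ xc) xc)
  exact ((hψ.sub_const (ψ xc)).sub hlin).congr_fderiv (by ext v; simp)

/-- On the segment from `p` to `u` the convex part lies below its chord, so
`t ↦ φ (p + t • (u - p)) + t * (f u - f p)` is minimal on `[0, 1]` at `0`, and Fermat's theorem
applies to it. -/
theorem IsMinOn.inner_gradient_add_sub_nonneg {φ f : E → ℝ} {g p : E}
    (hmin : IsMinOn (φ + f) Set.univ p) (hφ : HasGradientAt φ g p)
    (hf : ConvexOn ℝ Set.univ f) (u : E) :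
    0 ≤ inner ℝ g (u - p) + (f u - f p) := by
  set h : ℝ → ℝ := fun t => φ (p + t • (u - p)) + t * (f u - f p)
  have hline : HasDerivAt (fun t : ℝ => p + t • (u - p)) (u - p) 0 := by
    simpa using ((hasDerivAt_id (0 : ℝ)).smul_const (u - p)).const_add p
  have hderiv : HasDerivAt h (inner ℝ g (u - p) + (f u - f p)) 0 := by
    have hφ' : HasFDerivAt φ (InnerProductSpace.toDual ℝ E g) (p + (0 : ℝ) • (u - p)) := by
      simpa [hasGradientAt_iff_hasFDerivAt] using hφ
    exact ((hφ'.comp_hasDerivAt 0 hline).add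
      ((hasDerivAt_id (0 : ℝ)).mul_const (f u - f p))).congr_deriv (by simp)
  have hminh : IsMinOn h (Set.Icc 0 1) 0 := by
    intro t ⟨ht0, ht1⟩
    have hchord := hf.2 (Set.mem_univ p) (Set.mem_univ u) (sub_nonneg.2 ht1) ht0 (by ring)
    rw [show (1 - t) • p + t • u = p + t • (u - p) by module, smul_eq_mul, smul_eq_mul]
      at hchord
    have hle := isMinOn_univ_iff.1 hmin (p + t • (u - p))
    simp only [Pi.add_apply] at hle
    show h 0 ≤ h t
    simp only [h, zero_smul, add_zero, zero_mul]
    linarith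
  have hcone : (1 : ℝ) ∈ posTangentConeAt (Set.Icc (0 : ℝ) 1) 0 :=
    mem_posTangentConeAt_of_segment_subset (by simp [segment_eq_Icc])
  simpa using hminh.localize.hasFDerivWithinAt_nonneg hderiv.hasFDerivAt.hasFDerivWithinAt hcone

theorem breg_le_of_isMinOn_breg_add (hgrad : ∀ y, HasGradientAt ψ (Dψ y) y) {f : E → ℝ}
    (hf : ConvexOn ℝ Set.univ f) {xc p : E}
    (hmin : IsMinOn (fun y => breg ψ Dψ y xc + f y) Set.univ p) (u : E) :
    breg ψ Dψ u p ≤ breg ψ Dψ u xc + f u - breg ψ Dψ p xc - f p := by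
  have hopt := IsMinOn.inner_gradient_add_sub_nonneg (φ := fun y => breg ψ Dψ y xc) hmin
    (hasGradientAt_breg_left (hgrad p) xc) hf u
  rw [breg_three_point u p xc]
  linarith

theorem sub_le_sub_sub_breg_div_add (hgrad : ∀ y, HasGradientAt ψ (Dψ y) y)
    {f : E → ℝ} (hf : ConvexOn ℝ Set.univ f) {η : ℝ} (hη : 0 < η) {xc p : E}
    (hmin : IsMinOn (fun y => breg ψ Dψ y xc + η * f y) Set.univ p) (u : E) :
    f xc - f u ≤
      f xc - f p - breg ψ Dψ p xc / η + (breg ψ Dψ u xc - breg ψ Dψ u p) / η := by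
  have h3 := breg_le_of_isMinOn_breg_add hgrad (hf.smul hη.le) hmin u
  simp only [smul_eq_mul] at h3
  have hdiv : f p - f u + breg ψ Dψ p xc / η ≤ (breg ψ Dψ u xc - breg ψ Dψ u p) / η := by
    rw [le_div_iff₀ hη, add_mul, div_mul_cancel₀ _ hη.ne']
    linarith
  linarith

end Bregman

section Doubling

variable {E : Type*} {T : ℕ} {c : ℝ} {η : ℕ → ℝ} {ep : ℕ → ℕ} {S δ : ℕ → ℝ}
  {x x' : ℕ → E}

def DoublingStep (c : ℝ) (η : ℕ → ℝ) (ep : ℕ → ℕ) (S δ : ℕ → ℝ) (x x' : ℕ → E) (t : ℕ) :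
    Prop :=
  if η (ep t) * c * 2 ^ ep t ≤ S (t - 1) + δ t then
    ep (t + 1) = ep t + 1 ∧ S t = 0 ∧ x (t + 1) = x 1
  else
    ep (t + 1) = ep t ∧ S t = S (t - 1) + δ t ∧ x (t + 1) = x' (t + 1)

theorem DoublingStep.sum_le_threshold (hη : ∀ i, 0 < η i) (hc : 0 ≤ c) (hep1 : ep 1 = 0)
    (hS0 : S 0 = 0) (hstep : ∀ t ∈ Icc 1 T, DoublingStep c η ep S δ x x' t) {t : ℕ}
    (ht : t ≤ T) : S t ≤ η (ep (t + 1)) * c * 2 ^ ep (t + 1) := by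
  have hthr : ∀ i, 0 ≤ η i * c * 2 ^ i := fun i => by have := hη i; positivity
  cases t with
  | zero => simpa [hS0, hep1] using hthr 0
  | succ t =>
    have h := hstep (t + 1) (mem_Icc.2 ⟨by omega, ht⟩)
    rw [DoublingStep, Nat.add_sub_cancel] at h
    split_ifs at h with hcond
    · exact h.2.1 ▸ hthr _
    · rw [h.1, h.2.1]
      exact (not_le.1 hcond).le

/-- Each completed epoch `i` contributes `∑ δ / η_i ≥ c 2ⁱ`, while every `δ / η ≤ c / 2`. -/
theorem DoublingStep.epoch_count (hη : ∀ i, 0 < η i) (hep1 : ep 1 = 0) (hS0 : S 0 = 0)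
    (hδ0 : ∀ t ∈ Icc 1 T, 0 ≤ δ t) (hδc : ∀ t ∈ Icc 1 T, δ t ≤ η (ep t) * c / 2)
    (hstep : ∀ t ∈ Icc 1 T, DoublingStep c η ep S δ x x' t) :
    ∀ t ≤ T, 0 ≤ S t ∧ c * (2 ^ ep (t + 1) - 1) + S t / η (ep (t + 1)) ≤ c * t / 2 := by
  intro t
  induction t with
  | zero => intro _; simp [hS0, hep1]
  | succ t ih =>
    intro ht
    obtain ⟨hS, hcount⟩ := ih (by omega)
    have hmem : t + 1 ∈ Icc 1 T := mem_Icc.2 ⟨by omega, ht⟩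
    have hpos := hη (ep (t + 1))
    have hgain : δ (t + 1) / η (ep (t + 1)) ≤ c / 2 := by
      rw [div_le_iff₀ hpos]; linarith [hδc _ hmem]
    have h := hstep (t + 1) hmem
    rw [DoublingStep, Nat.add_sub_cancel] at h
    push_cast
    split_ifs at h with hcond
    · obtain ⟨hep, hSt, -⟩ := h
      have hcond' :
          c * 2 ^ ep (t + 1) ≤ S t / η (ep (t + 1)) + δ (t + 1) / η (ep (t + 1)) := by
        rw [← add_div, le_div_iff₀ hpos]; linarith
      rw [hep, hSt, zero_div, pow_succ]
      exact ⟨le_rfl, by linarith⟩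
    · obtain ⟨hep, hSt, -⟩ := h
      rw [hep, hSt, add_div]
      exact ⟨by linarith [hδ0 _ hmem], by linarith⟩

/-- The regret of each completed epoch `i` is at most `D (x 1) / η_i` plus its total gain,
which is below `η_i c 2ⁱ + η_i c / 2`. -/
theorem DoublingStep.regret_le (hη : ∀ i, 0 < η i) (hc : 0 ≤ c) (hep1 : ep 1 = 0)
    (hS0 : S 0 = 0) {D : E → ℝ} (hD : ∀ y, 0 ≤ D y) {g : ℕ → ℝ}
    (hg : ∀ t ∈ Icc 1 T, g t ≤ δ t + (D (x t) - D (x' (t + 1))) / η (ep t))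
    (hδc : ∀ t ∈ Icc 1 T, δ t ≤ η (ep t) * c / 2)
    (hstep : ∀ t ∈ Icc 1 T, DoublingStep c η ep S δ x x' t) :
    ∀ t ≤ T, ∑ s ∈ Icc 1 t, g s ≤
      ∑ i ∈ range (ep (t + 1)), (D (x 1) / η i + η i * c * 2 ^ i + η i * c / 2) + S t +
        (D (x 1) - D (x (t + 1))) / η (ep (t + 1)) := by
  intro t
  induction t with
  | zero => intro _; simp [hS0, hep1]
  | succ t ih =>
    intro ht
    have hmem : t + 1 ∈ Icc 1 T := mem_Icc.2 ⟨by omega, ht⟩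
    have hprev := ih (by omega)
    have hround := hg _ hmem
    have hsum : ∑ s ∈ Icc 1 (t + 1), g s = ∑ s ∈ Icc 1 t, g s + g (t + 1) :=
      sum_Icc_succ_top (by omega) g
    have hdiv : (D (x 1) - D (x (t + 1))) / η (ep (t + 1)) +
        (D (x (t + 1)) - D (x' (t + 1 + 1))) / η (ep (t + 1)) =
        (D (x 1) - D (x' (t + 1 + 1))) / η (ep (t + 1)) := by
      rw [← add_div, sub_add_sub_cancel]
    have h := hstep (t + 1) hmem
    rw [DoublingStep, Nat.add_sub_cancel] at h
    split_ifs at h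
    · obtain ⟨hep, hSt, hx⟩ := h
      have hthr := DoublingStep.sum_le_threshold hη hc hep1 hS0 hstep (t := t) (by omega)
      have hdrop : (D (x 1) - D (x' (t + 1 + 1))) / η (ep (t + 1)) ≤
          D (x 1) / η (ep (t + 1)) := by
        gcongr
        · exact (hη _).le
        · linarith [hD (x' (t + 1 + 1))]
      rw [hep, hSt, hx, sum_range_succ, sub_self, zero_div, add_zero, add_zero, hsum]
      linarith [hδc _ hmem]
    · obtain ⟨hep, hSt, hx⟩ := h
      rw [hep, hSt, hx, hsum]
      linarith

theorem DoublingStep.regret_le_sum_epochs (hη : ∀ i, 0 < η i) (hc : 0 < c) (hep1 : ep 1 = 0)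
    (hS0 : S 0 = 0) {D : E → ℝ} (hD : ∀ y, 0 ≤ D y) {g : ℕ → ℝ}
    (hg : ∀ t ∈ Icc 1 T, g t ≤ δ t + (D (x t) - D (x' (t + 1))) / η (ep t))
    (hδ0 : ∀ t ∈ Icc 1 T, 0 ≤ δ t) (hδc : ∀ t ∈ Icc 1 T, δ t ≤ η (ep t) * c / 2)
    (hstep : ∀ t ∈ Icc 1 T, DoublingStep c η ep S δ x x' t) :
    ∃ j : ℕ, (2 : ℝ) ^ j ≤ T + 1 ∧ ∑ t ∈ Icc 1 T, g t ≤
      ∑ i ∈ range (j + 1), (D (x 1) / η i + η i * c * 2 ^ i + η i * c / 2) := by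
  refine ⟨ep (T + 1), ?_, ?_⟩
  · obtain ⟨hS, hcount⟩ := DoublingStep.epoch_count hη hep1 hS0 hδ0 hδc hstep T le_rfl
    have hcount' : c * (2 ^ ep (T + 1) - 1) ≤ c * (T / 2) := by
      have hSη := div_nonneg hS (hη (ep (T + 1))).le
      linarith
    have hpow := le_of_mul_le_mul_left hcount' hc
    linarith [(Nat.cast_nonneg T : (0 : ℝ) ≤ T)]
  · have hreg := DoublingStep.regret_le hη hc.le hep1 hS0 hD hg hδc hstep T le_rfl
    have hthr := DoublingStep.sum_le_threshold hη hc.le hep1 hS0 hstep (le_refl T)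
    have hpos := hη (ep (T + 1))
    have hdrop : (D (x 1) - D (x (T + 1))) / η (ep (T + 1)) ≤ D (x 1) / η (ep (T + 1)) := by
      gcongr
      linarith [hD (x (T + 1))]
    have hlast : 0 ≤ η (ep (T + 1)) * c / 2 := by positivity
    rw [sum_range_succ]
    linarith

end Doubling

theorem geom_sum_range_succ_le_of_one_lt {q : ℝ} (hq : 1 < q) (j : ℕ) :
    ∑ i ∈ range (j + 1), q ^ i ≤ q / (q - 1) * q ^ j := by
  have hq1 : 0 < q - 1 := sub_pos.2 hq
  rw [geom_sum_eq hq.ne', div_mul_eq_mul_div, ← pow_succ', div_le_div_iff_of_pos_right hq1]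
  linarith

/-- With `η_i = β / (L √(2ⁱ))` the budget of epoch `i` is
`(B/β + β) L √2ⁱ + (β L / 2) √2⁻ⁱ`. -/
theorem sum_epoch_budget_le {L β B : ℝ} (hL : 0 < L) (hβ : 0 < β) (hB : 0 ≤ B) {η : ℕ → ℝ}
    (hη : ∀ i, η i = β / (L * Real.sqrt (2 ^ i))) {j : ℕ} {N : ℝ} (hj : 2 ^ j ≤ N) :
    ∑ i ∈ range (j + 1), (B / η i + η i * L ^ 2 * 2 ^ i + η i * L ^ 2 / 2) ≤
      Real.sqrt 2 / (Real.sqrt 2 - 1) * (B / β + β) * L * Real.sqrt N +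
        Real.sqrt 2 / (Real.sqrt 2 - 1) * (β * L) / 2 := by
  set q := Real.sqrt 2
  have hq : 1 < q := by simp [q, Real.lt_sqrt]
  have hq0 : 0 < q := one_pos.trans hq
  have hsqrt : ∀ i : ℕ, Real.sqrt (2 ^ i) = q ^ i := fun i => by
    rw [Real.sqrt_eq_iff_mul_self_eq (by positivity) (by positivity), ← mul_pow,
      Real.mul_self_sqrt zero_le_two]
  have hterm : ∀ i : ℕ, B / η i + η i * L ^ 2 * 2 ^ i + η i * L ^ 2 / 2 =
      (B / β + β) * L * q ^ i + β * L / 2 * q⁻¹ ^ i := fun i => by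
    have h2 : (2 : ℝ) ^ i = q ^ i * q ^ i := by rw [← mul_pow, Real.mul_self_sqrt zero_le_two]
    rw [hη, hsqrt, inv_pow, h2]
    field_simp
  have hgeom_inv : ∑ i ∈ range (j + 1), q⁻¹ ^ i ≤ q / (q - 1) := by
    have hle := geom_sum_Ico_le_of_lt_one (m := 0) (n := j + 1) (inv_pos.2 hq0).le
      (inv_lt_one_of_one_lt₀ hq)
    rwa [← range_eq_Ico, pow_zero, show 1 / (1 - q⁻¹) = q / (q - 1) by field_simp] at hle
  have hqj : q ^ j ≤ Real.sqrt N := hsqrt j ▸ Real.sqrt_le_sqrt hj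
  rw [sum_congr rfl fun i _ => hterm i, sum_add_distrib, ← mul_sum, ← mul_sum]
  calc (B / β + β) * L * ∑ i ∈ range (j + 1), q ^ i +
        β * L / 2 * ∑ i ∈ range (j + 1), q⁻¹ ^ i
      ≤ (B / β + β) * L * (q / (q - 1) * Real.sqrt N) + β * L / 2 * (q / (q - 1)) := by
        gcongr
        exact (geom_sum_range_succ_le_of_one_lt hq j).trans (by gcongr)
    _ = _ := by ring

theorem doubling_trick_iomd_regret_general {d : ℕ}
    (ψ : EuclideanSpace ℝ (Fin d) → ℝ)
    (Dψ : EuclideanSpace ℝ (Fin d) → EuclideanSpace ℝ (Fin d))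
    (n : EuclideanSpace ℝ (Fin d) → ℝ)
    (hgrad : ∀ x, HasGradientAt ψ (Dψ x) x)
    -- `ψ` is 1-strongly convex w.r.t. `n`:
    (hsc : ∀ a b, ψ b + (inner ℝ (Dψ b) (a - b) : ℝ) + 1 / 2 * (n (a - b)) ^ 2 ≤ ψ a)
    (T : ℕ)
    (L β : ℝ) (hL : 0 < L) (hβ : 0 < β)
    (ℓ : ℕ → EuclideanSpace ℝ (Fin d) → ℝ)
    (hconv : ∀ t ∈ Icc 1 T, ConvexOn ℝ Set.univ (ℓ t))
    -- the losses are `L`-Lipschitz w.r.t. `n`: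
    (hlip : ∀ t ∈ Icc 1 T, ∀ a b, |ℓ t a - ℓ t b| ≤ L * n (a - b))
    -- step size of epoch `i`:
    (η : ℕ → ℝ) (hη : ∀ i, η i = β / (L * Real.sqrt (2 ^ i)))
    -- state of the algorithm: iterates `x`, proposed updates `x'`, epoch index `ep`,
    -- monitored sum `S`, per-round gains `δ`:
    (x x' : ℕ → EuclideanSpace ℝ (Fin d))
    (ep : ℕ → ℕ) (S δ : ℕ → ℝ)
    (hep1 : ep 1 = 0) (hS0 : S 0 = 0)
    (hupdate : ∀ t ∈ Icc 1 T, ∀ y,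
      breg ψ Dψ (x' (t + 1)) (x t) + η (ep t) * ℓ t (x' (t + 1)) ≤
        breg ψ Dψ y (x t) + η (ep t) * ℓ t y)
    (hδ : ∀ t ∈ Icc 1 T,
      δ t = ℓ t (x t) - ℓ t (x' (t + 1)) - breg ψ Dψ (x' (t + 1)) (x t) / η (ep t))
    -- restart rule: double when the monitored sum reaches the threshold `η_i L² 2ⁱ`:
    (hstep : ∀ t ∈ Icc 1 T,
      if η (ep t) * L ^ 2 * 2 ^ ep t ≤ S (t - 1) + δ t then
        ep (t + 1) = ep t + 1 ∧ S t = 0 ∧ x (t + 1) = x 1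
      else
        ep (t + 1) = ep t ∧ S t = S (t - 1) + δ t ∧ x (t + 1) = x' (t + 1)) :
    ∀ u, ∑ t ∈ Icc 1 T, (ℓ t (x t) - ℓ t u) ≤
      Real.sqrt 2 / (Real.sqrt 2 - 1) * (breg ψ Dψ u (x 1) / β + β) * L *
          Real.sqrt (T + 1) +
        Real.sqrt 2 / (Real.sqrt 2 - 1) * (β * L) / 2 := by
  intro u
  have hηpos : ∀ i, 0 < η i := fun i => by rw [hη i]; positivity
  have hbreg : ∀ y, 0 ≤ breg ψ Dψ u y := fun y =>
    le_trans (by positivity) (half_sq_le_breg (hsc u y))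
  have hmin : ∀ t ∈ Icc 1 T,
      IsMinOn (fun y => breg ψ Dψ y (x t) + η (ep t) * ℓ t y) Set.univ (x' (t + 1)) :=
    fun t ht => isMinOn_univ_iff.2 (hupdate t ht)
  obtain ⟨j, hj, hregret⟩ := DoublingStep.regret_le_sum_epochs (c := L ^ 2)
    (g := fun t => ℓ t (x t) - ℓ t u) hηpos (by positivity) hep1 hS0 hbreg
    (fun t ht => hδ t ht ▸
      sub_le_sub_sub_breg_div_add hgrad (hconv t ht) (hηpos _) (hmin t ht) u)
    (fun t ht => hδ t ht ▸ sub_nonneg.2 (breg_div_le_sub_of_isMinOn (hηpos _) (hmin t ht)))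
    (fun t ht => hδ t ht ▸ sub_sub_breg_div_le (hηpos _) (hsc _ _) (hlip t ht _ _)) hstep
  exact hregret.trans (sum_epoch_budget_le hL hβ (hbreg (x 1)) hη hj)

/-- Regret of IOMD with the doubling trick: with `L`-Lipschitz convex losses and a
`1`-strongly convex regularizer, step sizes `η_i = β/(L√(2ⁱ))` and epoch thresholds
`η_i L² 2ⁱ`, the regret is at most `c(B_ψ(u,x₁)/β + β)L√(T+1) + cβL/2`, `c = √2/(√2−1)`. -/
theorem doubling_trick_iomd_regret {d : ℕ}
    (ψ : EuclideanSpace ℝ (Fin d) → ℝ)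
    (Dψ : EuclideanSpace ℝ (Fin d) → EuclideanSpace ℝ (Fin d))
    (n ns : EuclideanSpace ℝ (Fin d) → ℝ)
    -- `n` is a norm with dual norm `ns`:
    (hn0 : ∀ v, 0 ≤ n v)
    (hntri : ∀ v w, n (v + w) ≤ n v + n w)
    (hnhom : ∀ (r : ℝ) v, n (r • v) = |r| * n v)
    (hdual : ∀ g v, (inner ℝ g v : ℝ) ≤ ns g * n v)
    (hgrad : ∀ x, HasGradientAt ψ (Dψ x) x)
    -- `ψ` is 1-strongly convex w.r.t. `n`:
    (hsc : ∀ a b, ψ b + (inner ℝ (Dψ b) (a - b) : ℝ) + 1 / 2 * (n (a - b)) ^ 2 ≤ ψ a)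
    (T : ℕ) (hT : 1 ≤ T)
    (L β : ℝ) (hL : 0 < L) (hβ : 0 < β)
    (ℓ : ℕ → EuclideanSpace ℝ (Fin d) → ℝ)
    (hconv : ∀ t ∈ Icc 1 T, ConvexOn ℝ Set.univ (ℓ t))
    -- the losses are `L`-Lipschitz w.r.t. `n`:
    (hlip : ∀ t ∈ Icc 1 T, ∀ a b, |ℓ t a - ℓ t b| ≤ L * n (a - b))
    -- step size of epoch `i`:
    (η : ℕ → ℝ) (hη : ∀ i, η i = β / (L * Real.sqrt (2 ^ i)))
    -- state of the algorithm: iterates `x`, proposed updates `x'`, epoch index `ep`,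
    -- monitored sum `S`, per-round gains `δ`:
    (x x' : ℕ → EuclideanSpace ℝ (Fin d))
    (ep : ℕ → ℕ) (S δ : ℕ → ℝ)
    (hep1 : ep 1 = 0) (hS0 : S 0 = 0)
    (hupdate : ∀ t ∈ Icc 1 T, ∀ y,
      breg ψ Dψ (x' (t + 1)) (x t) + η (ep t) * ℓ t (x' (t + 1)) ≤
        breg ψ Dψ y (x t) + η (ep t) * ℓ t y)
    (hδ : ∀ t ∈ Icc 1 T,
      δ t = ℓ t (x t) - ℓ t (x' (t + 1)) - breg ψ Dψ (x' (t + 1)) (x t) / η (ep t))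
    -- restart rule: double when the monitored sum reaches the threshold `η_i L² 2ⁱ`:
    (hstep : ∀ t ∈ Icc 1 T,
      if η (ep t) * L ^ 2 * 2 ^ ep t ≤ S (t - 1) + δ t then
        ep (t + 1) = ep t + 1 ∧ S t = 0 ∧ x (t + 1) = x 1
      else
        ep (t + 1) = ep t ∧ S t = S (t - 1) + δ t ∧ x (t + 1) = x' (t + 1)) :
    ∀ u, ∑ t ∈ Icc 1 T, (ℓ t (x t) - ℓ t u) ≤
      Real.sqrt 2 / (Real.sqrt 2 - 1) * (breg ψ Dψ u (x 1) / β + β) * L *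
          Real.sqrt (T + 1) +
        Real.sqrt 2 / (Real.sqrt 2 - 1) * (β * L) / 2 :=
  doubling_trick_iomd_regret_general ψ Dψ n hgrad hsc T L β hL hβ ℓ hconv hlip η hη x x' ep S δ hep1
    hS0 hupdate hδ hstep
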